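/- For every vector x ∈ ℝ³ with ‖x‖ < 1, setting γ = 1/(1 + √(1 − ‖x‖²)), the matrix R := I + x̂ + γ x̂² is a rotation: Rᵗ R = I, det(R) = 1, and its skew-symmetric part recovers x̂, i.e. ½(R − Rᵗ) = x̂. In particular (I + γ x̂²)² = I + x̂². -/

import Mathlib

/-!
For a skew-symmetric `A` with `A³ = -c A`, the matrix `R = 1 + A + γ A²` is orthogonal as soon
as `γ (2 - γ c) = 1`: since `A` commutes with `A²`, `Rᵀ R = (1 + γ A²)² - A²`, and
`(1 + γ A²)² = 1 + γ (2 - γ c) A²`. For `A = x̂` one has `c = ‖x‖²`, and `γ = 1/(1 + √(1 - c))`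
is the root of `γ (2 - γ c) = 1` with `1 - γ c = √(1 - c)`; this last identity also turns the
explicit formula `det R = (1 - γ c)² + c` into `det R = 1`.
-/

open Matrix Real

noncomputable section

/-- The hat map sending `x ∈ ℝ³` to the skew-symmetric matrix `x̂` with `x̂ y = x × y`. -/
def hat (x : EuclideanSpace ℝ (Fin 3)) : Matrix (Fin 3) (Fin 3) ℝ :=
  !![0, -x 2, x 1; x 2, 0, -x 0; -x 1, x 0, 0]

section SkewMatrix

variable {n R : Type*} [Fintype n] [DecidableEq n] [CommRing R] {A : Matrix n n R} {c γ : R}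

theorem one_add_smul_sq_sq (hA : A ^ 3 = -c • A) (hγ : γ * (2 - γ * c) = 1) :
    (1 + γ • A ^ 2) ^ 2 = 1 + A ^ 2 := by
  have hA4 : A ^ 4 = -c • A ^ 2 := by
    rw [pow_succ', hA, mul_smul_comm, ← sq]
  calc (1 + γ • A ^ 2) ^ 2 = 1 + ((2 * γ) • A ^ 2 + γ ^ 2 • A ^ 4) := by
        rw [sq, add_mul, one_mul, mul_add, mul_one, smul_mul_smul_comm, ← pow_add, add_assoc]
        congr 1
        module
    _ = 1 + (γ * (2 - γ * c)) • A ^ 2 := by rw [hA4]; congr 1; module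
    _ = 1 + A ^ 2 := by rw [hγ, one_smul]

theorem transpose_mul_self_eq_one (hAT : Aᵀ = -A) (hA : A ^ 3 = -c • A)
    (hγ : γ * (2 - γ * c) = 1) : (1 + A + γ • A ^ 2)ᵀ * (1 + A + γ • A ^ 2) = 1 := by
  have hT : (1 + A + γ • A ^ 2)ᵀ = 1 - A + γ • A ^ 2 := by
    rw [transpose_add, transpose_add, transpose_one, transpose_smul, transpose_pow, hAT,
      neg_sq, sub_eq_add_neg]
  have hcomm : γ • A ^ 2 * A = A * γ • A ^ 2 := by
    rw [smul_mul_assoc, mul_smul_comm, ← pow_succ, ← pow_succ']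
  have expand (M : Matrix n n R) :
      (1 - A + M) * (1 + A + M) = (1 + M) ^ 2 - A ^ 2 + (M * A - A * M) := by
    noncomm_ring
  rw [hT, expand, hcomm, sub_self, one_add_smul_sq_sq hA hγ]
  abel

theorem half_smul_sub_transpose {K : Type*} [Field K] [NeZero (2 : K)] {A : Matrix n n K}
    (hAT : Aᵀ = -A) (γ : K) :
    (1 / 2 : K) • ((1 + A + γ • A ^ 2) - (1 + A + γ • A ^ 2)ᵀ) = A := by
  rw [transpose_add, transpose_add, transpose_one, transpose_smul, transpose_pow, hAT, neg_sq]
  have hdiff : (1 + A + γ • A ^ 2) - (1 + -A + γ • A ^ 2) = (2 : K) • A := by module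
  rw [hdiff, smul_smul, one_div_mul_cancel two_ne_zero, one_smul]

end SkewMatrix

theorem hat_transpose (x : EuclideanSpace ℝ (Fin 3)) : (hat x)ᵀ = -hat x := by
  ext i j
  fin_cases i <;> fin_cases j <;> simp [hat]

theorem hat_pow_three (x : EuclideanSpace ℝ (Fin 3)) : hat x ^ 3 = -(‖x‖ ^ 2) • hat x := by
  rw [EuclideanSpace.real_norm_sq_eq, Fin.sum_univ_three]
  ext i j
  fin_cases i <;> fin_cases j <;>
    simp [hat, pow_succ, Matrix.mul_apply, Fin.sum_univ_three] <;> ring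

theorem det_one_add_hat_add_smul_hat_sq (x : EuclideanSpace ℝ (Fin 3)) (g : ℝ) :
    (1 + hat x + g • hat x ^ 2).det = (1 - g * ‖x‖ ^ 2) ^ 2 + ‖x‖ ^ 2 := by
  rw [EuclideanSpace.real_norm_sq_eq, Fin.sum_univ_three]
  simp [Matrix.det_fin_three, hat, sq]
  ring

theorem one_sub_one_div_one_add_sqrt_mul {t : ℝ} (ht : t ≤ 1) :
    1 - 1 / (1 + √(1 - t)) * t = √(1 - t) := by
  have hs : √(1 - t) ^ 2 = 1 - t := sq_sqrt (by linarith)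
  have : 0 < 1 + √(1 - t) := by positivity
  field_simp
  linear_combination -hs

theorem one_div_one_add_sqrt_mul_two_sub {t : ℝ} (ht : t ≤ 1) :
    1 / (1 + √(1 - t)) * (2 - 1 / (1 + √(1 - t)) * t) = 1 := by
  have : 0 < 1 + √(1 - t) := by positivity
  rw [show 2 - 1 / (1 + √(1 - t)) * t = 1 + √(1 - t) by
    linarith [one_sub_one_div_one_add_sqrt_mul ht]]
  field_simp

/-- For `‖x‖ < 1` with `γ = 1/(1 + √(1 − ‖x‖²))`, the matrix `R = I + x̂ + γ x̂²`
is a rotation: `Rᵗ R = I`, `det R = 1`, its skew-symmetric part is `x̂`, and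
`(I + γ x̂²)² = I + x̂²`. -/
theorem unskew_is_rotation (x : EuclideanSpace ℝ (Fin 3)) (hx : ‖x‖ < 1) :
    (1 + hat x + (1 / (1 + Real.sqrt (1 - ‖x‖ ^ 2))) • hat x ^ 2)ᵀ
        * (1 + hat x + (1 / (1 + Real.sqrt (1 - ‖x‖ ^ 2))) • hat x ^ 2) = 1
    ∧ (1 + hat x + (1 / (1 + Real.sqrt (1 - ‖x‖ ^ 2))) • hat x ^ 2).det = 1
    ∧ (1 / 2 : ℝ) •
        ((1 + hat x + (1 / (1 + Real.sqrt (1 - ‖x‖ ^ 2))) • hat x ^ 2)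
          - (1 + hat x + (1 / (1 + Real.sqrt (1 - ‖x‖ ^ 2))) • hat x ^ 2)ᵀ)
        = hat x
    ∧ (1 + (1 / (1 + Real.sqrt (1 - ‖x‖ ^ 2))) • hat x ^ 2) ^ 2 = 1 + hat x ^ 2 := by
  have hx2 : ‖x‖ ^ 2 ≤ 1 := by nlinarith [norm_nonneg x]
  have hγ := one_div_one_add_sqrt_mul_two_sub hx2
  refine ⟨transpose_mul_self_eq_one (hat_transpose x) (hat_pow_three x) hγ, ?_,
    half_smul_sub_transpose (hat_transpose x) _, one_add_smul_sq_sq (hat_pow_three x) hγ⟩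
  rw [det_one_add_hat_add_smul_hat_sq, one_sub_one_div_one_add_sqrt_mul hx2,
    sq_sqrt (by linarith)]
  ring
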